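/- For a bounded-zigzag Turing machine T, the column subshift S_H (observing cell 0 of the moving-head system T_H) is sofic: its language of finite factors is regular. -/

import Mathlib

/-!
Once the head has left the window `[-N, N]` around cell `0` it never returns to `0`. Hence the
column observed at `0` from a configuration with its head at `0` only depends on the state and
the `2N + 1` window cells, so there are finitely many such columns; each is eventually periodic,
since the configuration ranges over a finite set while the head stays in the window, and the
column is constant once it has left. Any other column is constant, or a constant waiting
period followed by one of these finitely many columns, and the admissible waiting times form an
initial segment of `ℕ`. Prefix languages of this shape have finitely many left quotients, so
they are regular by the Myhill–Nerode theorem.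
-/

/-- A Turing machine with tape alphabet `A`, state set `Q`, and rule
`δ : A × Q → A × Q × {-1,1}` (the direction is encoded by a `Bool`). -/
structure TuringMachine (A Q : Type*) where
  δ : A → Q → A × Q × Bool

namespace TuringMachine

variable {A Q : Type*}

/-- Direction of a move: `true ↦ +1`, `false ↦ -1`. -/
def dir (b : Bool) : ℤ := if b then 1 else -1

/-- A configuration: tape contents, head state, head position. -/
abbrev Config (A Q : Type*) := (ℤ → A) × Q × ℤ

/-- One step of the machine on `X = A^ℤ × Q × ℤ`. -/
def step (M : TuringMachine A Q) (c : Config A Q) : Config A Q :=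
  let r := M.δ (c.1 c.2.2) c.2.1
  (Function.update c.1 c.2.2 r.1, r.2.1, c.2.2 + dir r.2.2)

/-- Head position after `t` steps. -/
def pos (M : TuringMachine A Q) (t : ℕ) (c : Config A Q) : ℤ :=
  ((M.step)^[t] c).2.2

/-- `c` is preperiodic for the machine. -/
def Preperiodic (M : TuringMachine A Q) (c : Config A Q) : Prop :=
  ∃ m p : ℕ, 0 < p ∧ (M.step)^[m + p] c = (M.step)^[m] c

end TuringMachine

namespace TuringMachine

variable {A Q : Type*}

/-- Alphabet of the moving-head system: a tape letter, or a tape letter marked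
with the head together with its state. -/
abbrev Cell (A Q : Type*) := A ⊕ (A × Q)

/-- A cell carries the head. -/
def isHead {A Q : Type*} (b : Cell A Q) : Prop := ∃ p : A × Q, b = Sum.inr p

/-- Membership in the moving-head phase space X_H: at most one marked cell. -/
def XHmem (x : ℤ → Cell A Q) : Prop :=
  Set.Subsingleton {i : ℤ | isHead (x i)}

/-- One step of the moving-head system T_H on (A ⊔ (A × Q))^ℤ: if there is a
head, apply the rule of the machine at the marked cell (write, change state, and
move the mark by ±1); otherwise do nothing. -/
noncomputable def hstep (M : TuringMachine A Q) (x : ℤ → Cell A Q) :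
    ℤ → Cell A Q := by
  classical
  exact if h : ∃ i : ℤ, ∃ b : A, ∃ q : Q, x i = Sum.inr (b, q) then
    let i := h.choose
    let b := h.choose_spec.choose
    let q := h.choose_spec.choose_spec.choose
    let r := M.δ b q
    let y := Function.update x i (Sum.inl r.1)
    let j := i + dir r.2.2
    Function.update y j
      (match y j with
        | Sum.inl c => Sum.inr (c, r.2.1)
        | Sum.inr (c, _) => Sum.inr (c, r.2.1))
  else x

/-- The column observed at cell 0, defining the subshift S_H. -/
noncomputable def tauH (M : TuringMachine A Q) (x : ℤ → Cell A Q) (t : ℕ) :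
    Cell A Q :=
  ((M.hstep)^[t] x) 0

/-- The language of finite factors of the column subshift S_H. -/
noncomputable def langSH (M : TuringMachine A Q) : Language (Cell A Q) :=
  {w : List (Cell A Q) | ∃ x : ℤ → Cell A Q, XHmem x ∧ ∃ m : ℕ,
    ∀ j : ℕ, ∀ hj : j < w.length, w.get ⟨j, hj⟩ = M.tauH x (m + j)}

end TuringMachine

theorem IsLowerSet.finite_range_preimage_add {R : Set ℕ} (hR : IsLowerSet R) :
    (Set.range fun j => (· + j) ⁻¹' R).Finite := by
  by_cases h : ∃ K, K ∉ R
  · obtain ⟨K, hK⟩ := h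
    have hempty : ∀ j, K ≤ j → (· + j) ⁻¹' R = ∅ := fun j hj =>
      Set.eq_empty_of_forall_notMem fun k hk => hK (hR (by omega : K ≤ k + j) hk)
    refine ((Set.finite_Iic K).image fun j => (· + j) ⁻¹' R).subset ?_
    rintro _ ⟨j, rfl⟩
    rcases le_total j K with hj | hj
    · exact ⟨j, hj, rfl⟩
    · exact ⟨K, Set.self_mem_Iic, (hempty K le_rfl).trans (hempty j hj).symm⟩
  · push Not at h
    refine (Set.finite_singleton Set.univ).subset ?_
    rintro _ ⟨j, rfl⟩
    exact Set.eq_univ_of_forall fun k => h _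

namespace Language

variable {α : Type*}

theorem leftQuotient_iSup {ι : Sort*} (L : ι → Language α) (x : List α) :
    (⨆ i, L i).leftQuotient x = ⨆ i, (L i).leftQuotient x := by
  ext y
  simp only [mem_leftQuotient, mem_iSup]

theorem IsRegular.iSup {ι : Type*} [Finite ι] {L : ι → Language α}
    (h : ∀ i, (L i).IsRegular) : (⨆ i, L i).IsRegular := by
  refine .of_finite_range_leftQuotient <|
    ((Set.Finite.pi fun i => (h i).finite_range_leftQuotient).image fun f => ⨆ i, f i).subset ?_
  rintro _ ⟨x, rfl⟩
  exact ⟨fun i => (L i).leftQuotient x, fun i _ => ⟨x, rfl⟩, (leftQuotient_iSup L x).symm⟩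

theorem IsRegular.of_leftQuotient_mem {L : Language α} (T : Set (Language α)) (hT : T.Finite)
    (hL : L ∈ T) (hquot : ∀ M ∈ T, ∀ a, M.leftQuotient [a] ∈ T) : L.IsRegular := by
  refine .of_finite_range_leftQuotient (hT.subset ?_)
  rintro _ ⟨x, rfl⟩
  induction x using List.reverseRecOn with
  | nil => exact hL
  | append_singleton x a ih => rw [leftQuotient_append]; exact hquot _ ih a

def prefixes (s : ℕ → α) : Language α := {w | ∀ j (hj : j < w.length), w[j] = s j}

theorem cons_mem_prefixes {s : ℕ → α} {a : α} {w : List α} :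
    a :: w ∈ prefixes s ↔ a = s 0 ∧ w ∈ prefixes fun t => s (t + 1) := by
  refine ⟨fun h => ⟨h 0 (by simp), fun j hj => h (j + 1) (by simpa using hj)⟩, ?_⟩
  rintro ⟨h0, h⟩ (_ | j) hj
  · exact h0
  · exact h j (by simpa using hj)

theorem leftQuotient_prefixes (s : ℕ → α) (a : α) [Decidable (a = s 0)] :
    (prefixes s).leftQuotient [a] = if a = s 0 then prefixes (fun t => s (t + 1)) else 0 := by
  ext w
  rw [mem_leftQuotient, List.singleton_append, cons_mem_prefixes]
  split_ifs with ha <;> simp [ha, notMem_zero]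

def prefixQuotients (s : ℕ → α) : Set (Language α) :=
  insert 0 (Set.range fun n => prefixes fun t => s (t + n))

theorem leftQuotient_mem_prefixQuotients {s : ℕ → α} {L : Language α}
    (hL : L ∈ prefixQuotients s) (a : α) : L.leftQuotient [a] ∈ prefixQuotients s := by
  classical
  obtain rfl | ⟨n, rfl⟩ := hL
  · exact .inl rfl
  rw [leftQuotient_prefixes]
  split_ifs
  · exact .inr ⟨n + 1, by simp only [add_assoc, add_comm 1 n]⟩
  · exact .inl rfl

theorem finite_prefixQuotients {s : ℕ → α} (hs : (Set.range fun n t => s (t + n)).Finite) :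
    (prefixQuotients s).Finite := by
  refine (hs.image prefixes).insert 0 |>.subset ?_
  rintro _ (rfl | ⟨n, rfl⟩)
  exacts [.inl rfl, .inr ⟨_, ⟨n, rfl⟩, rfl⟩]

theorem isRegular_prefixes {s : ℕ → α} (hs : (Set.range fun n t => s (t + n)).Finite) :
    (prefixes s).IsRegular :=
  .of_leftQuotient_mem _ (finite_prefixQuotients hs) (.inr ⟨0, rfl⟩)
    fun _ hM a => leftQuotient_mem_prefixQuotients hM a

def delay (c : α) (k : ℕ) (s : ℕ → α) : ℕ → α :=
  fun t => if t < k then c else s (t - k)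

theorem delay_zero (c : α) (s : ℕ → α) : delay c 0 s = s := by
  funext t; simp [delay]

theorem delay_add (c : α) (k n : ℕ) (s : ℕ → α) :
    (fun t => delay c (k + n) s (t + n)) = delay c k s := by
  funext t
  simp only [delay, add_lt_add_iff_right, Nat.add_sub_add_right]

theorem delay_succ_zero (c : α) (k : ℕ) (s : ℕ → α) : delay c (k + 1) s 0 = c := by
  simp [delay]

def delayedPrefixes (c : α) (R : Set ℕ) (s : ℕ → α) : Language α :=
  ⨆ k ∈ R, prefixes (delay c k s)

theorem mem_delayedPrefixes {c : α} {R : Set ℕ} {s : ℕ → α} {w : List α} :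
    w ∈ delayedPrefixes c R s ↔ ∃ k ∈ R, w ∈ prefixes (delay c k s) := by
  simp only [delayedPrefixes, mem_iSup, exists_prop]

theorem cons_mem_delayedPrefixes {c : α} {R : Set ℕ} {s : ℕ → α} {a : α} {w : List α} :
    a :: w ∈ delayedPrefixes c R s ↔
      a = c ∧ w ∈ delayedPrefixes c ((· + 1) ⁻¹' R) s ∨
        0 ∈ R ∧ a = s 0 ∧ w ∈ prefixes fun t => s (t + 1) := by
  simp only [mem_delayedPrefixes, cons_mem_prefixes]
  constructor
  · rintro ⟨_ | k, hk, ha, hw⟩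
    · rw [delay_zero] at ha hw
      exact .inr ⟨hk, ha, hw⟩
    · exact .inl ⟨ha.trans (delay_succ_zero c k s), k, hk, by rwa [delay_add] at hw⟩
  · rintro (⟨ha, k, hk, hw⟩ | ⟨h0, ha, hw⟩)
    · exact ⟨k + 1, hk, ha.trans (delay_succ_zero c k s).symm, by rwa [delay_add]⟩
    · exact ⟨0, h0, by rwa [delay_zero], by rwa [delay_zero]⟩

theorem leftQuotient_delayedPrefixes {c : α} (R : Set ℕ) {s : ℕ → α} (hs : s 0 ≠ c)
    (a : α) [Decidable (a = c)] [Decidable (0 ∈ R ∧ a = s 0)] :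
    (delayedPrefixes c R s).leftQuotient [a] =
      if a = c then delayedPrefixes c ((· + 1) ⁻¹' R) s
      else if 0 ∈ R ∧ a = s 0 then prefixes (fun t => s (t + 1)) else 0 := by
  ext w
  rw [mem_leftQuotient, List.singleton_append, cons_mem_delayedPrefixes]
  split_ifs with ha h0
  · subst ha
    simp [Ne.symm hs]
  · obtain ⟨h0, rfl⟩ := h0
    simp [h0, hs]
  · simp only [ha, false_and, false_or, notMem_zero, iff_false, not_and]
    exact fun h0' ha' => absurd ⟨h0', ha'⟩ h0

theorem isRegular_delayedPrefixes {c : α} {R : Set ℕ} {s : ℕ → α} (hs0 : s 0 ≠ c)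
    (hR : (Set.range fun j => (· + j) ⁻¹' R).Finite)
    (hs : (Set.range fun n t => s (t + n)).Finite) :
    (delayedPrefixes c R s).IsRegular := by
  classical
  refine .of_leftQuotient_mem
    (prefixQuotients s ∪ Set.range fun j => delayedPrefixes c ((· + j) ⁻¹' R) s)
    ((finite_prefixQuotients hs).union ((hR.image fun R' => delayedPrefixes c R' s).subset ?_))
    (.inr ⟨0, rfl⟩) ?_
  · rintro _ ⟨j, rfl⟩
    exact ⟨_, ⟨j, rfl⟩, rfl⟩
  rintro M (hM | ⟨j, rfl⟩) a
  · exact .inl (leftQuotient_mem_prefixQuotients hM a)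
  rw [leftQuotient_delayedPrefixes _ hs0]
  split_ifs
  · refine .inr ⟨j + 1, ?_⟩
    simp only [Set.preimage_preimage, Nat.add_right_comm _ 1 j, add_assoc]
  · exact .inl (.inr ⟨1, rfl⟩)
  · exact .inl (.inl rfl)

theorem isLowerSet_setOf_delay_mem {c : α} {s : ℕ → α} {C : Set (ℕ → α)}
    (hC : ∀ u ∈ C, ∀ n, (fun t => u (t + n)) ∈ C) : IsLowerSet {k | delay c k s ∈ C} := by
  intro k k' hle hk
  obtain ⟨n, rfl⟩ := Nat.exists_eq_add_of_le hle
  show delay c k' s ∈ C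
  rw [← delay_add c k' n]
  exact hC _ hk n

end Language

namespace TuringMachine

variable {A Q : Type*} (M : TuringMachine A Q)

open Language

lemma dir_ne_zero (b : Bool) : dir b ≠ 0 := by cases b <;> simp [dir]

def embed (c : Config A Q) : ℤ → Cell A Q :=
  fun k => if k = c.2.2 then Sum.inr (c.1 c.2.2, c.2.1) else Sum.inl (c.1 k)

lemma embed_of_ne {c : Config A Q} {k : ℤ} (hk : k ≠ c.2.2) : embed c k = Sum.inl (c.1 k) :=
  if_neg hk

lemma eq_of_embed_eq_inr {c : Config A Q} {k : ℤ} {p : A × Q} (h : embed c k = Sum.inr p) :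
    k = c.2.2 := by
  by_contra hk
  rw [embed_of_ne hk] at h
  exact Sum.inl_ne_inr h

lemma XHmem_embed (c : Config A Q) : XHmem (embed c) :=
  fun _ ⟨_, hi⟩ _ ⟨_, hj⟩ => (eq_of_embed_eq_inr hi).trans (eq_of_embed_eq_inr hj).symm

lemma hstep_embed (c : Config A Q) : M.hstep (embed c) = embed (M.step c) := by
  classical
  have hex : ∃ i b q, embed c i = Sum.inr (b, q) := ⟨c.2.2, _, _, if_pos rfl⟩
  have hspec := hex.choose_spec.choose_spec.choose_spec
  simp only [hstep, dif_pos hex]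
  generalize hex.choose_spec.choose_spec.choose = q at hspec ⊢
  generalize hex.choose_spec.choose = b at hspec ⊢
  generalize hex.choose = i at hspec ⊢
  obtain rfl := eq_of_embed_eq_inr hspec
  obtain ⟨rfl, rfl⟩ : c.1 c.2.2 = b ∧ c.2.1 = q := by
    simpa [embed] using hspec
  obtain ⟨τ, q, i⟩ := c
  dsimp only [step]
  generalize M.δ (τ i) q = r
  have hj : i + dir r.2.2 ≠ i := by have := dir_ne_zero r.2.2; omega
  have hyj : Function.update (embed (τ, q, i)) i (Sum.inl r.1) (i + dir r.2.2) =
      Sum.inl (τ (i + dir r.2.2)) := by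
    rw [Function.update_of_ne hj, embed_of_ne hj]
  funext k
  rw [hyj]
  simp only [embed, Function.update_apply]
  by_cases h1 : k = i + dir r.2.2
  · simp [h1, hj]
  · by_cases h2 : k = i <;> simp [h1, h2, dir_ne_zero]

lemma iterate_hstep_embed (c : Config A Q) (t : ℕ) :
    (M.hstep)^[t] (embed c) = embed ((M.step)^[t] c) := by
  induction t with
  | zero => rfl
  | succ t ih => rw [Function.iterate_succ_apply', ih, hstep_embed, Function.iterate_succ_apply']

lemma hstep_of_headless {x : ℤ → Cell A Q} (h : ∀ i, ¬ isHead (x i)) : M.hstep x = x := by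
  rw [hstep, dif_neg]
  rintro ⟨i, b, q, hi⟩
  exact h i ⟨(b, q), hi⟩

lemma XHmem.headless_or_eq_embed {x : ℤ → Cell A Q} (hx : XHmem x) :
    (∀ i, ¬ isHead (x i)) ∨ ∃ c : Config A Q, x = embed c := by
  by_cases h : ∃ i, isHead (x i)
  · obtain ⟨i, ⟨b, q⟩, hi⟩ := h
    refine .inr ⟨(fun k => Sum.elim id Prod.fst (x k), q, i), funext fun k => ?_⟩
    rcases eq_or_ne k i with rfl | hk
    · simp [embed, hi]
    · rw [embed_of_ne hk]
      rcases hxk : x k with a | p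
      · simp [hxk]
      · exact absurd (hx ⟨p, hxk⟩ ⟨(b, q), hi⟩) hk
  · exact .inl fun i hi => h ⟨i, hi⟩

def column (c : Config A Q) (t : ℕ) : Cell A Q := embed ((M.step)^[t] c) 0

lemma tauH_embed (c : Config A Q) : M.tauH (embed c) = M.column c := by
  funext t
  rw [tauH, iterate_hstep_embed]
  rfl

lemma tauH_of_headless {x : ℤ → Cell A Q} (h : ∀ i, ¬ isHead (x i)) (t : ℕ) :
    M.tauH x t = x 0 := by
  rw [tauH, Function.iterate_fixed (M.hstep_of_headless h)]

lemma column_add (c : Config A Q) (t n : ℕ) :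
    M.column c (t + n) = M.column ((M.step)^[n] c) t := by
  rw [column, column, Function.iterate_add_apply]

lemma column_shift (c : Config A Q) (n : ℕ) :
    (fun t => M.column c (t + n)) = M.column ((M.step)^[n] c) :=
  funext fun t => M.column_add c t n

lemma shift_mem_range_column {u : ℕ → Cell A Q} (hu : u ∈ Set.range M.column) (n : ℕ) :
    (fun t => u (t + n)) ∈ Set.range M.column := by
  obtain ⟨c, rfl⟩ := hu
  exact ⟨_, (M.column_shift c n).symm⟩

lemma pos_iterate (c : Config A Q) (s n : ℕ) : M.pos s ((M.step)^[n] c) = M.pos (s + n) c := by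
  rw [pos, pos, Function.iterate_add_apply]

lemma iterate_tape_of_pos_ne {c : Config A Q} {k : ℤ} {t : ℕ} (h : ∀ s < t, M.pos s c ≠ k) :
    ((M.step)^[t] c).1 k = c.1 k := by
  induction t with
  | zero => rfl
  | succ t ih =>
    rw [Function.iterate_succ_apply', step]
    exact (Function.update_of_ne (Ne.symm (h t t.lt_succ_self)) _ _).trans
      (ih fun s hs => h s (by omega))

lemma column_of_pos_ne {c : Config A Q} {t : ℕ} (h : M.pos t c ≠ 0) :
    M.column c t = Sum.inl (((M.step)^[t] c).1 0) :=
  embed_of_ne (Ne.symm h)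

lemma column_eq_const_of_forall_pos_ne {c : Config A Q} (h : ∀ s, M.pos s c ≠ 0) :
    M.column c = fun _ => Sum.inl (c.1 0) :=
  funext fun t => by rw [column_of_pos_ne M (h t), iterate_tape_of_pos_ne M fun s _ => h s]

lemma column_eq_const_or_delay (d : Config A Q) :
    (∃ a, M.column d = fun _ => Sum.inl a) ∨
      ∃ a k, ∃ c : Config A Q, c.2.2 = 0 ∧ M.column d = delay (Sum.inl a) k (M.column c) := by
  classical
  by_cases h : ∃ k, M.pos k d = 0
  · obtain ⟨k, hk0, hk⟩ : ∃ k, M.pos k d = 0 ∧ ∀ s < k, M.pos s d ≠ 0 :=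
      ⟨Nat.find h, Nat.find_spec h, fun s => Nat.find_min h⟩
    refine .inr ⟨((M.step)^[k] d).1 0, k, (M.step)^[k] d, hk0, funext fun t => ?_⟩
    simp only [delay]
    split_ifs with ht
    · obtain ⟨m, rfl⟩ := Nat.exists_eq_add_of_le' ht.le
      rw [column_of_pos_ne M (hk t ht), Function.iterate_add_apply,
        iterate_tape_of_pos_ne M (c := (M.step)^[t] d) fun s hs => by
          rw [pos_iterate]; exact hk _ (by omega)]
    · rw [← column_add, Nat.sub_add_cancel (not_lt.mp ht)]
  · push Not at h
    exact .inl ⟨d.1 0, M.column_eq_const_of_forall_pos_ne h⟩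

lemma mem_langSH_iff {w : List (Cell A Q)} :
    w ∈ M.langSH ↔
      (∃ a, w ∈ prefixes fun _ => Sum.inl a) ∨ ∃ c, w ∈ prefixes (M.column c) := by
  constructor
  · rintro ⟨x, hx, m, hw⟩
    rcases hx.headless_or_eq_embed with hx | ⟨c, rfl⟩
    · rcases hx0 : x 0 with a | p
      · exact .inl ⟨a, fun j hj => by simpa [M.tauH_of_headless hx, hx0] using hw j hj⟩
      · exact absurd ⟨p, hx0⟩ (hx 0)
    · refine .inr ⟨(M.step)^[m] c, fun j hj => ?_⟩
      simpa [tauH_embed, ← column_add, add_comm m j] using hw j hj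
  · rintro (⟨a, hw⟩ | ⟨c, hw⟩)
    · have hx : ∀ i, ¬ isHead ((fun _ : ℤ => (Sum.inl a : Cell A Q)) i) := by
        rintro i ⟨p, hp⟩
        exact Sum.inl_ne_inr hp
      refine ⟨fun _ => Sum.inl a, fun i hi => absurd hi (hx i), 0, fun j hj => ?_⟩
      simpa [M.tauH_of_headless hx] using hw j hj
    · exact ⟨embed c, XHmem_embed c, 0, fun j hj => by simpa [tauH_embed] using hw j hj⟩

lemma langSH_eq :
    M.langSH = (⨆ a : A, prefixes fun _ => Sum.inl a) +
      ⨆ (a : A) (s : M.column '' {c | c.2.2 = 0}),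
        delayedPrefixes (Sum.inl a) {k | delay (Sum.inl a) k s ∈ Set.range M.column} s := by
  ext w
  simp only [mem_langSH_iff, mem_add, mem_iSup, mem_delayedPrefixes]
  constructor
  · rintro (hw | ⟨d, hw⟩)
    · exact .inl hw
    rcases M.column_eq_const_or_delay d with ⟨a, hd⟩ | ⟨a, k, c, hc, hd⟩
    · exact .inl ⟨a, hd ▸ hw⟩
    · exact .inr ⟨a, ⟨_, c, hc, rfl⟩, k, ⟨d, hd⟩, hd ▸ hw⟩
  · rintro (hw | ⟨a, s, k, ⟨d, hd⟩, hw⟩)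
    · exact .inl hw
    · exact .inr ⟨d, hd ▸ hw⟩

lemma step_agree {I : Set ℤ} {c d : Config A Q} (h2 : c.2 = d.2) (hI : c.2.2 ∈ I)
    (h1 : ∀ k ∈ I, c.1 k = d.1 k) :
    (M.step c).2 = (M.step d).2 ∧ ∀ k ∈ I, (M.step c).1 k = (M.step d).1 k := by
  obtain ⟨τ, q, i⟩ := c
  obtain ⟨τ', q', i'⟩ := d
  obtain ⟨rfl, rfl⟩ := Prod.mk.inj h2
  have hread : τ i = τ' i := h1 i hI
  refine ⟨by simp [step, hread], fun k hk => ?_⟩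
  simp only [step, hread, Function.update_apply]
  split_ifs
  exacts [rfl, h1 k hk]

lemma iterate_agree {I : Set ℤ} {c d : Config A Q} (h2 : c.2 = d.2)
    (h1 : ∀ k ∈ I, c.1 k = d.1 k) {t : ℕ} (hin : ∀ s < t, M.pos s c ∈ I) :
    ((M.step)^[t] c).2 = ((M.step)^[t] d).2 ∧
      ∀ k ∈ I, ((M.step)^[t] c).1 k = ((M.step)^[t] d).1 k := by
  induction t with
  | zero => exact ⟨h2, h1⟩
  | succ t ih =>
    obtain ⟨h2', h1'⟩ := ih fun s hs => hin s (by omega)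
    rw [Function.iterate_succ_apply', Function.iterate_succ_apply']
    exact M.step_agree h2' (hin t (by omega)) h1'

lemma embed_zero_congr {c d : Config A Q} (h2 : c.2 = d.2) (h0 : c.1 0 = d.1 0) :
    embed c 0 = embed d 0 := by
  obtain ⟨τ, q, i⟩ := c
  obtain ⟨τ', q', i'⟩ := d
  obtain ⟨rfl, rfl⟩ := Prod.mk.inj h2
  dsimp only at h0
  by_cases hi : (0 : ℤ) = i
  · subst hi; simp [embed, h0]
  · simp [embed, hi, h0]

lemma finite_setOf_pos_mem_and_tape_eq_off [Finite A] [Finite Q] (I : Set ℤ) [Finite I]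
    (τ : ℤ → A) :
    {d : Config A Q | d.2.2 ∈ I ∧ ∀ k ∉ I, d.1 k = τ k}.Finite := by
  classical
  let G : (I → A) × Q × I → Config A Q := fun g =>
    (fun k => if h : k ∈ I then g.1 ⟨k, h⟩ else τ k, g.2.1, g.2.2)
  refine (Set.finite_range G).subset ?_
  rintro ⟨σ, q, i⟩ ⟨hi, hσ⟩
  refine ⟨(fun k => σ k, q, ⟨i, hi⟩), ?_⟩
  simp only [G, Prod.mk.injEq, and_true]
  funext k
  split_ifs with hk
  · rfl
  · exact (hσ k hk).symm

/-- The machine has no zigzag of width greater than `N`. -/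
def ZigzagBounded (N : ℕ) : Prop :=
  ∀ (x : Config A Q) (i : ℤ) (W t₁ t₂ : ℕ),
    N < W → 0 < t₁ → t₁ < t₂ → x.2.2 = i →
    (M.pos t₁ x = i + W ∨ M.pos t₁ x = i - W) → M.pos t₂ x ≠ i

namespace ZigzagBounded

variable {M} {N : ℕ}

lemma pos_ne_zero (hz : M.ZigzagBounded N) {c : Config A Q} (hc : c.2.2 = 0) {E t : ℕ}
    (hE : M.pos E c ∉ Set.Icc (-(N : ℤ)) N) (hEt : E ≤ t) : M.pos t c ≠ 0 := by
  rw [Set.mem_Icc] at hE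
  have hE0 : E ≠ 0 := by rintro rfl; exact hE (by simp [pos, hc])
  rcases hEt.eq_or_lt with rfl | hlt
  · omega
  · exact hz c 0 (M.pos E c).natAbs E t (by omega) (by omega) hlt hc (by omega)

lemma column_of_exit (hz : M.ZigzagBounded N) {c : Config A Q} (hc : c.2.2 = 0) {E t : ℕ}
    (hE : M.pos E c ∉ Set.Icc (-(N : ℤ)) N) (hEt : E ≤ t) :
    M.column c t = Sum.inl (((M.step)^[E] c).1 0) := by
  have h s : M.pos s ((M.step)^[E] c) ≠ 0 := by
    rw [pos_iterate]; exact hz.pos_ne_zero hc hE (by omega)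
  rw [← Nat.sub_add_cancel hEt, column_add, M.column_eq_const_of_forall_pos_ne h]

/-- The head cannot come back to `0` once it has left the window `[-N, N]`. -/
lemma column_eq (hz : M.ZigzagBounded N) {c d : Config A Q} (hc : c.2.2 = 0) (h2 : c.2 = d.2)
    (h1 : ∀ k ∈ Set.Icc (-(N : ℤ)) N, c.1 k = d.1 k) : M.column c = M.column d := by
  classical
  have h0 : (0 : ℤ) ∈ Set.Icc (-(N : ℤ)) N := by simp
  funext t
  by_cases hin : ∀ s < t, M.pos s c ∈ Set.Icc (-(N : ℤ)) N
  · obtain ⟨h2', h1'⟩ := M.iterate_agree h2 h1 hin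
    exact embed_zero_congr h2' (h1' 0 h0)
  · push Not at hin
    obtain ⟨s, hst, hs⟩ := hin
    have hex : ∃ E, M.pos E c ∉ Set.Icc (-(N : ℤ)) N := ⟨s, hs⟩
    set E := Nat.find hex
    have hEt : E ≤ t := (Nat.find_min' hex hs).trans hst.le
    obtain ⟨h2', h1'⟩ :=
      M.iterate_agree (t := E) h2 h1 fun s hs => not_not.mp (Nat.find_min hex hs)
    have hEd : M.pos E d ∉ Set.Icc (-(N : ℤ)) N := by
      rw [pos, ← h2']; exact Nat.find_spec hex
    rw [hz.column_of_exit hc (Nat.find_spec hex) hEt, hz.column_of_exit (h2 ▸ hc) hEd hEt,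
      h1' 0 h0]

lemma finite_column_image [Finite A] [Finite Q] (hz : M.ZigzagBounded N) :
    (M.column '' {c | c.2.2 = 0}).Finite := by
  classical
  rcases isEmpty_or_nonempty A with hA | ⟨⟨a⟩⟩
  · exact Set.finite_empty.subset (by rintro _ ⟨c, -, -⟩; exact isEmptyElim (c.1 0))
  let I := Set.Icc (-(N : ℤ)) N
  refine ((finite_setOf_pos_mem_and_tape_eq_off I fun _ => a).image M.column).subset ?_
  rintro _ ⟨c, hc, rfl⟩
  refine ⟨(fun k => if k ∈ I then c.1 k else a, c.2), ⟨?_, fun k hk => if_neg hk⟩, ?_⟩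
  · show c.2.2 ∈ I
    rw [show c.2.2 = 0 from hc]
    simp [I]
  · exact (hz.column_eq (d := (fun k => if k ∈ I then c.1 k else a, c.2)) hc rfl
      fun k hk => (if_pos hk).symm).symm

/-- Before leaving the window the head only changes the tape inside the window; afterwards the
column is constant. -/
lemma finite_range_column_iterate [Finite A] [Finite Q] (hz : M.ZigzagBounded N)
    {c : Config A Q} (hc : c.2.2 = 0) :
    (Set.range fun n => M.column ((M.step)^[n] c)).Finite := by
  classical
  let I := Set.Icc (-(N : ℤ)) N
  refine (((finite_setOf_pos_mem_and_tape_eq_off I c.1).image M.column).union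
    (Set.finite_range fun a : A => fun _ : ℕ => (Sum.inl a : Cell A Q))).subset ?_
  rintro _ ⟨n, rfl⟩
  by_cases hin : ∀ s ≤ n, M.pos s c ∈ I
  · exact .inl ⟨_, ⟨hin n le_rfl, fun k hk => M.iterate_tape_of_pos_ne fun s hs hsk =>
      hk (hsk ▸ hin s hs.le)⟩, rfl⟩
  · push Not at hin
    obtain ⟨E, hEn, hE⟩ := hin
    refine .inr ⟨_, (M.column_eq_const_of_forall_pos_ne fun s => ?_).symm⟩
    rw [pos_iterate]
    exact hz.pos_ne_zero hc hE (by omega)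

end ZigzagBounded

end TuringMachine

/-- For a bounded-zigzag machine (for some N, no left or right zigzag of width
greater than N), the column subshift S_H is sofic: its language of finite
factors is regular. -/
theorem langSH_regular_of_bounded_zigzag
    {A Q : Type*} [Fintype A] [Fintype Q]
    (M : TuringMachine A Q)
    (hzz : ∃ N : ℕ, ∀ (x : TuringMachine.Config A Q) (i : ℤ) (W t₁ t₂ : ℕ),
      N < W → 0 < t₁ → t₁ < t₂ → x.2.2 = i →
      (M.pos t₁ x = i + W ∨ M.pos t₁ x = i - W) → M.pos t₂ x ≠ i) :
    Language.IsRegular M.langSH := by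
  obtain ⟨N, hz⟩ := hzz
  replace hz : M.ZigzagBounded N := hz
  have := hz.finite_column_image.to_subtype
  rw [M.langSH_eq]
  refine (Language.IsRegular.iSup fun a => Language.isRegular_prefixes ?_).add
    (Language.IsRegular.iSup fun a => Language.IsRegular.iSup fun ⟨_, c, hc, hs⟩ => ?_)
  · exact (Set.finite_singleton _).subset (Set.range_subset_iff.2 fun _ => rfl)
  subst hs
  refine Language.isRegular_delayedPrefixes ?_
    (IsLowerSet.finite_range_preimage_add
      (Language.isLowerSet_setOf_delay_mem fun _ => M.shift_mem_range_column)) ?_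
  · simp [TuringMachine.column, TuringMachine.embed, show c.2.2 = 0 from hc]
  · rw [show (fun n t => M.column c (t + n)) = _ from funext (M.column_shift c)]
    exact hz.finite_range_column_iterate hc
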